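/- arXiv:1608.00335 — 10 statements merged into one kernel-verified Lean document; each statement's English description precedes it below -/
import Mathlib

section
/- For all positive integers N, the identity $\sum_{K=0}^{\lfloor N/2 \rfloor} 2^{N-2K} \binom{N}{K} \binom{N-K}{N-2K} = \binom{2N}{N}$ holds. -/
/-! Expand $(1 + X)^{2N} = (X^2 + (1 + 2X))^N$ binomially in $X^2$ and $1 + 2X$: the $K$-th term
contributes $\binom{N}{K} 2^{N-2K} \binom{N-K}{N-2K}$ to the coefficient of $X^N$, which is
$\binom{2N}{N}$. -/

open Polynomial Finset

theorem coeff_C_mul_X_add_one_pow {R : Type*} [CommSemiring R] (a : R) (n k : ℕ) :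
    ((C a * X + 1) ^ n).coeff k = a ^ k * n.choose k := by
  have hterm (m : ℕ) : (C a * X) ^ m * 1 ^ (n - m) * (n.choose m : R[X]) =
      C (a ^ m * n.choose m) * X ^ m := by
    rw [C_mul, C_pow, ← C_eq_natCast]; ring
  simp only [add_pow, hterm, finsetSum_coeff, coeff_C_mul_X_pow, sum_ite_eq, mem_range]
  split_ifs with h
  · rfl
  · rw [Nat.choose_eq_zero_of_lt (by omega), Nat.cast_zero, mul_zero]

theorem coeff_X_add_one_pow_two_mul_self (N : ℕ) :
    ((X + 1 : ℕ[X]) ^ (2 * N)).coeff N =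
      ∑ K ∈ range (N / 2 + 1), 2 ^ (N - 2 * K) * N.choose K * (N - K).choose (N - 2 * K) := by
  have hsq : (X + 1 : ℕ[X]) ^ 2 = X ^ 2 + (C 2 * X + 1) := by
    rw [C_ofNat]; ring
  have hrange : range (N / 2 + 1) = (range (N + 1)).filter (fun K => 2 * K ≤ N) := by
    ext K; simp only [mem_range, mem_filter]; omega
  rw [pow_mul, hsq, add_pow, finsetSum_coeff, hrange, sum_filter]
  refine sum_congr rfl fun K _ => ?_
  rw [← pow_mul, mul_assoc, ← C_eq_natCast, coeff_X_pow_mul', coeff_mul_C,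
    coeff_C_mul_X_add_one_pow, mul_right_comm]
  simp only [Nat.cast_id]

theorem sum_choose_two_pow_general (N : ℕ) :
    ∑ K ∈ Finset.range (N / 2 + 1),
      2 ^ (N - 2 * K) * N.choose K * (N - K).choose (N - 2 * K) = (2 * N).choose N := by
  rw [← coeff_X_add_one_pow_two_mul_self, coeff_X_add_one_pow, Nat.cast_id]

theorem sum_choose_two_pow (N : ℕ) (hN : 0 < N) :
    ∑ K ∈ Finset.range (N / 2 + 1),
      2 ^ (N - 2 * K) * N.choose K * (N - K).choose (N - 2 * K) = (2 * N).choose N :=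
  sum_choose_two_pow_general N
end

section
/- For every integer $n \geq 2$, $\sum_{k \geq 1} k \cdot \frac{2^{n-2k} \binom{n-1}{n-2k,\,k,\,k-1}}{\binom{2n-2}{n}} = \frac{n(n-1)}{4n-6}$, where the sum runs over all $k$ with $1 \leq 2k \leq n$. -/
/-!
Write `n = m + 2` and `k = j + 1`. The `k`-th term of the numerator is
`(m + 1) * C(m, j) * C(m - j, j) * 2 ^ (m - 2 j)`, and these sum to `(m + 1) * C(2m, m)`: read off
the coefficient of `X ^ m` on both sides of `(1 + X) ^ (2m) = (X (X + 2) + 1) ^ m`. The recurrence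
`(m + 2) * C(2m + 2, m + 2) = (4m + 2) * C(2m, m)` then turns the quotient by `C(2n - 2, n)` into
`(m + 1)(m + 2) / (4m + 2) = n(n - 1) / (4n - 6)`.
-/

/-- The multinomial coefficient `(n-1)! / ((n-2k)! k! (k-1)!)`, taken to be zero
when `n - 2k < 0`. -/
def multinom (n k : ℕ) : ℚ :=
  if 2 * k ≤ n then
    ((n - 1).factorial : ℚ) / (((n - 2 * k).factorial : ℚ) * (k.factorial : ℚ) *
      ((k - 1).factorial : ℚ))
  else 0

open Polynomial Finset

theorem Nat.sum_choose_mul_choose_mul_two_pow (m : ℕ) :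
    ∑ j ∈ range (m + 1), m.choose j * (m - j).choose j * 2 ^ (m - 2 * j) = (2 * m).choose m := by
  have hsq : ((1 : ℕ[X]) + X) ^ (2 * m) = (X * (X + C 2) + 1) ^ m := by
    rw [pow_mul, C_ofNat]; ring
  have hcoeff := coeff_one_add_X_pow ℕ (2 * m) m
  rw [Nat.cast_id] at hcoeff
  rw [← hcoeff, hsq, add_pow, finsetSum_coeff, ← sum_range_reflect]
  refine sum_congr rfl fun i hi => ?_
  have hi : i ≤ m := Nat.lt_succ_iff.mp (mem_range.mp hi)
  rw [one_pow, mul_one, mul_pow, mul_assoc (X ^ i), ← C_eq_natCast, coeff_X_pow_mul',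
    coeff_mul_C, coeff_X_add_C_pow, if_pos hi, Nat.add_sub_cancel, ← Nat.choose_symm hi,
    show m - (m - i) = i by omega, show m - 2 * (m - i) = i - (m - i) by omega, Nat.cast_id, Nat.cast_id]
  ring

theorem Nat.add_two_mul_choose_add_two (m : ℕ) :
    (m + 2) * (2 * m + 2).choose (m + 2) = (4 * m + 2) * (2 * m).choose m := by
  have hstep := Nat.choose_succ_right_eq (2 * m + 2) (m + 1)
  have hcentral := Nat.succ_mul_centralBinom_succ m
  rw [Nat.centralBinom_eq_two_mul_choose, Nat.centralBinom_eq_two_mul_choose,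
    show 2 * (m + 1) = 2 * m + 2 by ring] at hcentral
  rw [show 2 * m + 2 - (m + 1) = m + 1 by omega] at hstep
  linarith

theorem add_one_mul_multinom_add_two {m j : ℕ} (hj : 2 * j ≤ m) :
    ((j + 1 : ℕ) : ℚ) * multinom (m + 2) (j + 1) = (m + 1) * (m.choose j * (m - j).choose j) := by
  rw [multinom, if_pos (by omega), show m + 2 - 2 * (j + 1) = m - j - j by omega,
    Nat.add_sub_cancel, show m + 2 - 1 = m + 1 by omega, Nat.cast_choose ℚ (by omega : j ≤ m),
    Nat.cast_choose ℚ (by omega : j ≤ m - j), Nat.factorial_succ, Nat.factorial_succ]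
  push_cast
  field_simp

theorem sum_mul_two_pow_mul_multinom_add_two (m : ℕ) :
    ∑ k ∈ Icc 1 ((m + 2) / 2), (k : ℚ) * (2 ^ (m + 2 - 2 * k) * multinom (m + 2) k) =
      (m + 1) * (2 * m).choose m := by
  have htruncate : ∑ j ∈ range (m / 2 + 1), m.choose j * (m - j).choose j * 2 ^ (m - 2 * j) =
      (2 * m).choose m := by
    rw [← Nat.sum_choose_mul_choose_mul_two_pow]
    refine sum_subset (range_subset_range.2 (by omega)) fun j _ hj => ?_
    rw [mem_range] at hj
    rw [Nat.choose_eq_zero_of_lt (by omega : m - j < j), mul_zero, zero_mul]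
  rw [← htruncate, ← Ico_add_one_right_eq_Icc, sum_Ico_eq_sum_range,
    show (m + 2) / 2 + 1 - 1 = m / 2 + 1 by omega, Nat.cast_sum, mul_sum]
  refine sum_congr rfl fun j hj => ?_
  have hj : 2 * j ≤ m := by rw [mem_range] at hj; omega
  rw [add_comm 1 j, mul_left_comm, add_one_mul_multinom_add_two hj,
    show m + 2 - 2 * (j + 1) = m - 2 * j by omega]
  push_cast
  ring

theorem expected_components_complete_graph_general (n : ℕ) :
    ∑ k ∈ Finset.Icc 1 (n / 2),
      (k : ℚ) * ((2 : ℚ) ^ (n - 2 * k) * multinom n k) / (((2 * n - 2).choose n : ℚ)) =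
    ((n : ℚ) * ((n : ℚ) - 1)) / (4 * (n : ℚ) - 6) := by
  obtain _ | _ | m := n
  · simp
  · simp
  rw [← sum_div, sum_mul_two_pow_mul_multinom_add_two, show 2 * (m + 2) - 2 = 2 * m + 2 by omega]
  have hchoose : ((2 * m + 2).choose (m + 2) : ℚ) ≠ 0 := by
    exact_mod_cast (Nat.choose_pos (by omega)).ne'
  have hcentral : ((m + 2) * (2 * m + 2).choose (m + 2) : ℚ) = (4 * m + 2) * (2 * m).choose m := by
    exact_mod_cast Nat.add_two_mul_choose_add_two m
  rw [div_eq_div_iff hchoose (by push_cast; ring_nf; positivity)]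
  push_cast
  linear_combination -(m + 1 : ℚ) * hcentral

theorem expected_components_complete_graph (n : ℕ) (hn : 2 ≤ n) :
    ∑ k ∈ Finset.Icc 1 (n / 2),
      (k : ℚ) * ((2 : ℚ) ^ (n - 2 * k) * multinom n k) / (((2 * n - 2).choose n : ℚ)) =
    ((n : ℚ) * ((n : ℚ) - 1)) / (4 * (n : ℚ) - 6) :=
  expected_components_complete_graph_general n
end

section
/- For all positive integers $s, t$, $\sum_{k=1}^{\min(s,t)} \frac{k(s+t)\binom{s}{k}\binom{t}{k}}{st\binom{s+t}{s}} = 1$. That is, the quantities $P(K_{s,t},k) = \frac{k(s+t)\binom{s}{k}\binom{t}{k}}{st\binom{s+t}{s}}$ form a probability distribution on $k$. -/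
/-!
Since `k * C(s, k) = s * C(s - 1, k - 1)`, Vandermonde's identity gives
`∑ k, k * C(s, k) * C(t, k) = s * ∑ i, C(s - 1, i) * C(t, i + 1) = s * C(s + t - 1, s)`,
and `(s + t) * C(s + t - 1, s) = t * C(s + t, s)`.
-/

open Finset

namespace Nat

theorem sum_range_choose_mul_choose_add_one (m n : ℕ) :
    ∑ i ∈ range (m + 1), m.choose i * n.choose (i + 1) = (m + n).choose (m + 1) := by
  rw [add_choose_eq, Finset.Nat.sum_antidiagonal_succ', choose_succ_self, zero_mul, zero_add,
    ← Finset.Nat.sum_antidiagonal_swap, Finset.Nat.sum_antidiagonal_eq_sum_range_succ_mk]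
  refine sum_congr rfl fun i hi => ?_
  rw [Prod.swap_prod_mk, choose_symm_of_eq_add (by grind : m = m - i + i)]

theorem sum_range_mul_choose_mul_choose (m n : ℕ) :
    ∑ k ∈ range (m + 2), k * (m + 1).choose k * n.choose k =
      (m + 1) * (m + n).choose (m + 1) := by
  rw [sum_range_succ', ← sum_range_choose_mul_choose_add_one, mul_sum]
  simp only [zero_mul, add_zero]
  refine sum_congr rfl fun i _ => ?_
  rw [mul_comm (i + 1), ← add_one_mul_choose_eq, mul_assoc]

theorem sum_Icc_min_mul_choose_mul_choose (s t : ℕ) :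
    ∑ k ∈ Icc 1 (min s t), k * s.choose k * t.choose k
      = ∑ k ∈ range (s + 1), k * s.choose k * t.choose k := by
  refine sum_subset (fun k hk => ?_) fun k hk hk' => ?_
  · simp only [mem_Icc, mem_range] at hk ⊢; omega
  · simp only [mem_Icc, mem_range, not_and, not_le] at hk hk'
    rcases Nat.eq_zero_or_pos k with rfl | hk0
    · simp
    · simp [choose_eq_zero_of_lt (by omega : t < k)]

theorem add_mul_sum_Icc_min_mul_choose_mul_choose (s t : ℕ) :
    (s + t) * ∑ k ∈ Icc 1 (min s t), k * s.choose k * t.choose k =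
      s * t * (s + t).choose s := by
  obtain _ | m := s
  · simp
  obtain _ | n := t
  · simp
  have hsymm : (m + (n + 1)).choose (m + 1) = (m + n + 1).choose n :=
    choose_symm_of_eq_add (by ring)
  rw [sum_Icc_min_mul_choose_mul_choose, sum_range_mul_choose_mul_choose, hsymm, choose_symm_add]
  calc _ = (m + 1) * ((m + n + 1 + 1) * (m + n + 1).choose n) := by ring
    _ = (m + 1) * ((m + n + 1 + 1).choose (n + 1) * (n + 1)) := by rw [add_one_mul_choose_eq]
    _ = _ := by rw [show m + n + 1 + 1 = m + 1 + (n + 1) by ring]; ring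

end Nat

theorem bipartite_probabilities_sum_to_one (s t : ℕ) (hs : 1 ≤ s) (ht : 1 ≤ t) :
    ∑ k ∈ Finset.Icc 1 (min s t),
      ((k : ℚ) * ((s : ℚ) + (t : ℚ)) * (s.choose k : ℚ) * (t.choose k : ℚ)) /
        ((s : ℚ) * (t : ℚ) * ((s + t).choose s : ℚ)) = 1 := by
  have hchoose := Nat.choose_pos (Nat.le_add_right s t)
  have hden : (s : ℚ) * t * (s + t).choose s ≠ 0 := by positivity
  have key : ((s + t) * ∑ k ∈ Icc 1 (min s t), k * s.choose k * t.choose k : ℕ)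
      = (s * t * (s + t).choose s : ℚ) := by
    exact_mod_cast Nat.add_mul_sum_Icc_min_mul_choose_mul_choose s t
  rw [← sum_div, div_eq_one_iff_eq hden, ← key]
  push_cast
  rw [mul_sum]
  exact sum_congr rfl fun k _ => by ring
end

section
/- For all positive integers $s, t$, $\sum_{k=1}^{\min(s,t)} k \cdot \frac{k(s+t)\binom{s}{k}\binom{t}{k}}{st\binom{s+t}{s}} = \frac{st}{s+t-1}$. -/
/-! Since `k * C(s, k) = s * C(s - 1, k - 1)`, the sum `∑ k² C(s, k) C(t, k)` equals
`s t ∑ j C(s - 1, j) C(t - 1, j) = s t C(s + t - 2, s - 1)` by Vandermonde's identity, and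
`s t C(s + t, s) = (s + t)(s + t - 1) C(s + t - 2, s - 1)`. -/

open Finset

namespace Nat

theorem sum_range_choose_mul_choose (m n : ℕ) :
    ∑ i ∈ range (m + 1), m.choose i * n.choose i = (m + n).choose m := by
  rw [Nat.add_comm m n, add_choose_eq, Finset.Nat.sum_antidiagonal_eq_sum_range_succ_mk]
  refine sum_congr rfl fun i hi => ?_
  rw [choose_symm (mem_range_succ_iff.mp hi), mul_comm]

theorem add_one_mul_choose_add_one (n k : ℕ) :
    (k + 1) * (n + 1).choose (k + 1) = (n + 1) * n.choose k := by
  rw [mul_comm, add_one_mul_choose_eq]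

theorem sum_range_mul_choose_mul_mul_choose (m n : ℕ) :
    ∑ k ∈ range (m + 2), k * (m + 1).choose k * (k * (n + 1).choose k) =
      (m + 1) * (n + 1) * (m + n).choose m := by
  simp only [sum_range_succ' _ (m + 1), add_one_mul_choose_add_one, zero_mul, add_zero]
  rw [← sum_range_choose_mul_choose, mul_sum]
  exact sum_congr rfl fun k _ => by ring

theorem sum_Icc_min_mul_choose_mul_mul_choose (s t : ℕ) :
    ∑ k ∈ Icc 1 (min s t), k * s.choose k * (k * t.choose k) =
      ∑ k ∈ range (s + 1), k * s.choose k * (k * t.choose k) := by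
  refine sum_subset (fun k hk => ?_) fun k hks hk => ?_
  · simp only [mem_Icc, mem_range] at hk ⊢
    omega
  · rcases Nat.eq_zero_or_pos k with rfl | hk0
    · simp
    · have htk : t < k := by simp only [mem_Icc, mem_range, not_and_or, not_le] at hks hk; omega
      simp [choose_eq_zero_of_lt htk]

theorem add_add_two_choose_add_one_mul (m n : ℕ) :
    (m + n + 2).choose (m + 1) * ((m + 1) * (n + 1)) =
      (m + n + 2) * (m + n + 1) * (m + n).choose m := by
  have hsymm : (m + n + 1).choose m = (m + n + 1).choose (n + 1) :=
    choose_symm_of_eq_add (by omega)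
  calc (m + n + 2).choose (m + 1) * ((m + 1) * (n + 1))
      = (m + n + 2) * (m + n + 1).choose (n + 1) * (n + 1) := by
        rw [← hsymm, ← mul_assoc, ← add_one_mul_choose_eq (m + n + 1) m]
    _ = (m + n + 2) * (m + n + 1) * (m + n).choose m := by
        rw [mul_assoc, ← add_one_mul_choose_eq, choose_symm_add, mul_assoc]

end Nat

theorem expected_components_complete_bipartite (s t : ℕ) (hs : 1 ≤ s) (ht : 1 ≤ t) :
    ∑ k ∈ Finset.Icc 1 (min s t),
      (k : ℚ) * (((k : ℚ) * ((s : ℚ) + (t : ℚ)) * (s.choose k : ℚ) * (t.choose k : ℚ)) /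
        ((s : ℚ) * (t : ℚ) * ((s + t).choose s : ℚ))) =
    (s : ℚ) * (t : ℚ) / ((s : ℚ) + (t : ℚ) - 1) := by
  obtain ⟨m, rfl⟩ := Nat.exists_eq_add_of_le' hs
  obtain ⟨n, rfl⟩ := Nat.exists_eq_add_of_le' ht
  have hsum : ∑ k ∈ Icc 1 (min (m + 1) (n + 1)),
      k * (m + 1).choose k * (k * (n + 1).choose k) = (m + 1) * (n + 1) * (m + n).choose m := by
    rw [Nat.sum_Icc_min_mul_choose_mul_mul_choose, Nat.sum_range_mul_choose_mul_mul_choose]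
  have hchoose := Nat.add_add_two_choose_add_one_mul m n
  have hpos : (0 : ℚ) < (m + n + 2).choose (m + 1) := by exact_mod_cast Nat.choose_pos (by omega)
  calc _ = ((m + 1 + (n + 1) : ℚ) / ((m + 1) * (n + 1) * (m + n + 2).choose (m + 1))) *
        ((∑ k ∈ Icc 1 (min (m + 1) (n + 1)),
          k * (m + 1).choose k * (k * (n + 1).choose k) : ℕ) : ℚ) := by
        rw [show m + 1 + (n + 1) = m + n + 2 by ring]
        push_cast
        rw [mul_sum]
        exact sum_congr rfl fun k _ => by ring
    _ = _ := by
        have hden : (m + 1 + (n + 1) - 1 : ℚ) ≠ 0 := by ring_nf; positivity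
        rw [hsum]
        qify at hchoose
        push_cast
        field_simp
        linear_combination -hchoose
end

section
/- For integers $s, t \geq 1$ and $0 \leq a \leq s$, $0 \leq b \leq t$, and any integer $\ell$, the two expressions $\frac{\binom{b}{\ell}\binom{s+t-b-1}{a-\ell}}{\binom{s+t-1}{a}}$ and $\frac{\binom{a}{\ell}\binom{s+t-a-1}{b-\ell}}{\binom{s+t-1}{b}}$ are equal. -/
/-- Binomial coefficient of integer arguments, with the convention that it
vanishes when the lower index is negative or exceeds the upper index. -/
def intChoose (n k : ℤ) : ℚ :=
  if 0 ≤ k ∧ k ≤ n then (n.toNat.choose k.toNat : ℚ) else 0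

/-! Cleared of denominators, with `n = s + t - 1`, both sides count the ways to split `n` objects
into blocks of sizes `ℓ`, `a - ℓ`, `b - ℓ` and `n - a - b + ℓ`: choose the `b`-set first, or the
`a`-set first. -/

theorem Nat.choose_mul_choose_sub_comm (m i j : ℕ) :
    m.choose i * (m - i).choose j = m.choose j * (m - j).choose i := by
  have hi := Nat.choose_mul (n := m) (k := i + j) (Nat.le_add_right i j)
  have hj := Nat.choose_mul (n := m) (k := i + j) (Nat.le_add_left j i)
  rw [Nat.add_sub_cancel_left] at hi
  rw [Nat.add_sub_cancel] at hj
  rw [← hi, ← hj, Nat.choose_symm_add]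

theorem Nat.choose_mul_choose_sub_mul_choose_comm {n a b l : ℕ} (hla : l ≤ a) (hlb : l ≤ b) :
    b.choose l * (n - b).choose (a - l) * n.choose b =
      a.choose l * (n - a).choose (b - l) * n.choose a := by
  have through_l : ∀ {a b : ℕ}, l ≤ b → b.choose l * (n - b).choose (a - l) * n.choose b =
      n.choose l * ((n - l).choose (b - l) * (n - l - (b - l)).choose (a - l)) := by
    intro a b hlb
    rw [Nat.sub_sub, Nat.add_sub_cancel' hlb, mul_comm _ (n.choose b), ← mul_assoc,
      Nat.choose_mul hlb, mul_assoc]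
  rw [through_l hlb, through_l hla, Nat.choose_mul_choose_sub_comm]

theorem intChoose_natCast (m k : ℕ) : intChoose m k = m.choose k := by
  unfold intChoose
  split_ifs with h
  · simp
  · rw [Nat.choose_eq_zero_of_lt (by omega), Nat.cast_zero]

theorem intChoose_ne_zero {n k : ℤ} (hk : 0 ≤ k) (hkn : k ≤ n) : intChoose n k ≠ 0 := by
  rw [intChoose, if_pos ⟨hk, hkn⟩, Nat.cast_ne_zero]
  exact (Nat.choose_pos (by omega)).ne'

theorem intChoose_mul_intChoose_sub_mul_intChoose_eq_zero {n a b ℓ : ℤ}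
    (h : ¬(0 ≤ ℓ ∧ ℓ ≤ a ∧ ℓ ≤ b ∧ a ≤ n ∧ b ≤ n)) :
    intChoose b ℓ * intChoose (n - b) (a - ℓ) * intChoose n b = 0 := by
  simp only [intChoose]
  split_ifs <;> first | omega | simp

theorem intChoose_mul_intChoose_sub_mul_intChoose_comm (n a b ℓ : ℤ) :
    intChoose b ℓ * intChoose (n - b) (a - ℓ) * intChoose n b =
      intChoose a ℓ * intChoose (n - a) (b - ℓ) * intChoose n a := by
  by_cases h : 0 ≤ ℓ ∧ ℓ ≤ a ∧ ℓ ≤ b ∧ a ≤ n ∧ b ≤ n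
  · obtain ⟨hℓ, hla, hlb, han, hbn⟩ := h
    lift ℓ to ℕ using hℓ
    lift a to ℕ using by omega
    lift b to ℕ using by omega
    lift n to ℕ using by omega
    have hla : ℓ ≤ a := by exact_mod_cast hla
    have hlb : ℓ ≤ b := by exact_mod_cast hlb
    rw [← Nat.cast_sub (by omega : a ≤ n), ← Nat.cast_sub (by omega : b ≤ n),
      ← Nat.cast_sub hla, ← Nat.cast_sub hlb]
    simp only [intChoose_natCast]
    exact_mod_cast Nat.choose_mul_choose_sub_mul_choose_comm hla hlb
  · rw [intChoose_mul_intChoose_sub_mul_intChoose_eq_zero h,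
      intChoose_mul_intChoose_sub_mul_intChoose_eq_zero (by omega)]

theorem Q_two_forms_equal (s t a b : ℕ) (ℓ : ℤ) (hs : 1 ≤ s) (ht : 1 ≤ t)
    (ha : a ≤ s) (hb : b ≤ t) :
    intChoose (b : ℤ) ℓ * intChoose ((s : ℤ) + t - b - 1) ((a : ℤ) - ℓ) /
        intChoose ((s : ℤ) + t - 1) (a : ℤ) =
      intChoose (a : ℤ) ℓ * intChoose ((s : ℤ) + t - a - 1) ((b : ℤ) - ℓ) /
        intChoose ((s : ℤ) + t - 1) (b : ℤ) := by
  rw [div_eq_div_iff (intChoose_ne_zero (by omega) (by omega))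
    (intChoose_ne_zero (by omega) (by omega))]
  simpa only [sub_right_comm _ _ (1 : ℤ)] using
    intChoose_mul_intChoose_sub_mul_intChoose_comm ((s : ℤ) + t - 1) a b ℓ
end

section
/- Define $Q(a,b,\ell) = \frac{\binom{b}{\ell}\binom{s+t-b-1}{a-\ell}}{\binom{s+t-1}{a}}$ for integers $s,t \geq 1$, $0 \leq a \leq s$, $0 \leq b \leq t$, $\ell \geq 0$, with $Q(a,b,-1)=0$. Then for $1 \leq a \leq s$, $1 \leq b \leq t$, and $\ell \geq 0$: $(at+bs-ab) Q(a,b,\ell) = a(t-b)Q(a-1,b,\ell) + (s-a)b\,Q(a,b-1,\ell) + ab\,Q(a-1,b-1,\ell-1)$. -/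
/-- The intermediate probabilities `Q_{s,t}(a,b,ℓ)` for the forest building
process on the complete bipartite graph `K_{s,t}`.  Note that
`Q s t a b (-1) = 0` automatically since `intChoose b (-1) = 0`. -/
def Q (s t : ℕ) (a b : ℕ) (ℓ : ℤ) : ℚ :=
  intChoose (b : ℤ) ℓ * intChoose ((s : ℤ) + t - b - 1) ((a : ℤ) - ℓ) /
    intChoose ((s : ℤ) + t - 1) (a : ℤ)

lemma intChoose_of_neg {n k : ℤ} (h : k < 0) : intChoose n k = 0 := by
  simp only [intChoose, ite_eq_right_iff, Nat.cast_eq_zero, and_imp]; omega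

lemma intChoose_natCast_s6 (n k : ℕ) : intChoose n k = n.choose k := by
  rcases le_or_gt k n with h | h
  · simp [intChoose, h]
  · simp [intChoose, Nat.choose_eq_zero_of_lt h]

lemma intChoose_pos {n k : ℤ} (hk : 0 ≤ k) (h : k ≤ n) : 0 < intChoose n k := by
  simp only [intChoose, hk, h, and_self, ite_true]
  exact_mod_cast Nat.choose_pos (by omega)

lemma intChoose_succ_left {n : ℤ} (hn : 0 ≤ n) (k : ℤ) :
    intChoose (n + 1) k = intChoose n (k - 1) + intChoose n k := by
  lift n to ℕ using hn
  rcases lt_trichotomy k 0 with hk | rfl | hk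
  · simp [intChoose_of_neg, hk, show k - 1 < 0 by omega]
  · rw [zero_sub, intChoose_of_neg (k := -1) (by norm_num), zero_add, ← Nat.cast_add_one,
      ← Nat.cast_zero, intChoose_natCast_s6, intChoose_natCast_s6, Nat.choose_zero_right,
      Nat.choose_zero_right]
  · obtain ⟨m, rfl⟩ : ∃ m : ℕ, k = m + 1 := ⟨k.toNat - 1, by omega⟩
    rw [add_sub_cancel_right]
    simp only [← Nat.cast_add_one, intChoose_natCast_s6]
    exact_mod_cast Nat.choose_succ_succ' n m

lemma add_one_mul_intChoose_sub_one {n : ℤ} (hn : 0 ≤ n) (k : ℤ) :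
    (n + 1) * intChoose n (k - 1) = k * intChoose (n + 1) k := by
  lift n to ℕ using hn
  rcases lt_trichotomy k 0 with hk | rfl | hk
  · simp [intChoose_of_neg, hk, show k - 1 < 0 by omega]
  · rw [zero_sub, intChoose_of_neg (by norm_num), Int.cast_zero, mul_zero, zero_mul]
  · obtain ⟨m, rfl⟩ : ∃ m : ℕ, k = m + 1 := ⟨k.toNat - 1, by omega⟩
    rw [add_sub_cancel_right]
    simp only [← Nat.cast_add_one, intChoose_natCast_s6]
    exact_mod_cast (Nat.add_one_mul_choose_eq n m).trans (mul_comm _ _)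

lemma add_one_mul_intChoose {n : ℤ} (hn : 0 ≤ n) (k : ℤ) :
    (n + 1) * intChoose n k = (n + 1 - k) * intChoose (n + 1) k := by
  linear_combination -(n + 1 : ℚ) * intChoose_succ_left hn k - add_one_mul_intChoose_sub_one hn k

lemma mul_intChoose {n : ℤ} (hn : 0 ≤ n) (k : ℤ) :
    k * intChoose n k = (n - k + 1) * intChoose n (k - 1) := by
  have h : (n + 1 : ℚ) ≠ 0 := by positivity
  apply mul_left_cancel₀ h
  linear_combination (k : ℚ) * add_one_mul_intChoose hn k -
    (n + 1 - k : ℚ) * add_one_mul_intChoose_sub_one hn k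

/-- In the application `x, u, v = C(b, ℓ), C(b-1, ℓ-1), C(b-1, ℓ)`,
`p, q, y = C(M-1, k-1), C(M-1, k), C(M, k)` and `z, z' = C(N, a), C(N, a-1)`. -/
lemma recurrence_of_binomial_relations {s t a b ℓ x u v p q y z z' : ℚ}
    (hz : z ≠ 0) (hz' : z' ≠ 0) (hzz' : a * z = (s + t - a) * z')
    (hu : b * u = ℓ * x) (hv : b * v = (b - ℓ) * x)
    (hy : y = p + q) (hpq : (a - ℓ) * q = (s + t - b - a + ℓ) * p) :
    (a * t + b * s - a * b) * (x * q / z) =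
      a * (t - b) * (x * p / z') + (s - a) * b * (v * y / z) + a * b * (u * y / z') := by
  field_simp
  linear_combination (-(t - b) * x * p - b * u * y) * hzz' - (s - a) * y * z' * hv
    - (s + t - a) * y * z' * hu - ((s - a) * (b - ℓ) + (s + t - a) * ℓ) * x * z' * hy
    + t * x * z' * hpq

theorem Q_recurrence_general (s t a b : ℕ) (ℓ : ℤ)
    (ha1 : 1 ≤ a) (ha : a ≤ s) (hb1 : 1 ≤ b) (hb : b ≤ t) :
    ((a : ℚ) * t + (b : ℚ) * s - (a : ℚ) * b) * Q s t a b ℓ =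
      (a : ℚ) * ((t : ℚ) - b) * Q s t (a - 1) b ℓ +
        ((s : ℚ) - a) * (b : ℚ) * Q s t a (b - 1) ℓ +
        (a : ℚ) * (b : ℚ) * Q s t (a - 1) (b - 1) (ℓ - 1) := by
  have hQa : Q s t (a - 1) b ℓ = intChoose b ℓ * intChoose (s + t - b - 1) (a - ℓ - 1) /
      intChoose (s + t - 1) (a - 1) := by
    simp only [Q, Nat.cast_sub ha1]; ring_nf
  have hQb : Q s t a (b - 1) ℓ = intChoose (b - 1) ℓ * intChoose (s + t - b) (a - ℓ) /
      intChoose (s + t - 1) a := by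
    simp only [Q, Nat.cast_sub hb1]; ring_nf
  have hQab : Q s t (a - 1) (b - 1) (ℓ - 1) = intChoose (b - 1) (ℓ - 1) *
      intChoose (s + t - b) (a - ℓ) / intChoose (s + t - 1) (a - 1) := by
    simp only [Q, Nat.cast_sub ha1, Nat.cast_sub hb1]; ring_nf
  rw [hQa, hQb, hQab, Q]
  apply recurrence_of_binomial_relations (ℓ := ℓ)
  · exact (intChoose_pos (by omega) (by omega)).ne'
  · exact (intChoose_pos (by omega) (by omega)).ne'
  · have := mul_intChoose (n := s + t - 1) (by omega) a
    push_cast [sub_add_cancel] at this; linear_combination this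
  · have := add_one_mul_intChoose_sub_one (n := b - 1) (by omega) ℓ
    push_cast [sub_add_cancel] at this; linear_combination this
  · have := add_one_mul_intChoose (n := b - 1) (by omega) ℓ
    push_cast [sub_add_cancel] at this; linear_combination this
  · simpa using intChoose_succ_left (n := s + t - b - 1) (by omega) (a - ℓ)
  · have := mul_intChoose (n := s + t - b - 1) (by omega) (a - ℓ)
    push_cast [sub_add_cancel] at this; linear_combination this

theorem Q_recurrence (s t a b : ℕ) (ℓ : ℤ) (hs : 1 ≤ s) (ht : 1 ≤ t)
    (ha1 : 1 ≤ a) (ha : a ≤ s) (hb1 : 1 ≤ b) (hb : b ≤ t) (hℓ : 0 ≤ ℓ) :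
    ((a : ℚ) * t + (b : ℚ) * s - (a : ℚ) * b) * Q s t a b ℓ =
      (a : ℚ) * ((t : ℚ) - b) * Q s t (a - 1) b ℓ +
        ((s : ℚ) - a) * (b : ℚ) * Q s t a (b - 1) ℓ +
        (a : ℚ) * (b : ℚ) * Q s t (a - 1) (b - 1) (ℓ - 1) :=
  Q_recurrence_general s t a b ℓ ha1 ha hb1 hb
end

section
/- In the forest building process on a finite simple graph $G$ without isolated vertices (order the edges uniformly at random; keep an edge iff it is incident to a vertex not covered by any earlier edge), the expected number of connected components of the resulting spanning forest equals $\sum_{uv \in E(G)} \frac{1}{d(u)+d(v)-1}$. -/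
/-!
By linearity of expectation, the expected number of components is the sum over the edges `e = uv`
of the probability that `e` comes first among the `d(u) + d(v) - 1` edges sharing a vertex with it.
Precomposing an ordering with the transposition of two of these edges exchanges the events that
either one comes first, so each of them is equally likely to come first, with probability
`1 / (d(u) + d(v) - 1)`.
-/

open Finset

noncomputable section
open scoped Classical

namespace ForestBuilding

variable {V : Type*} [Fintype V]

/-- A uniformly random ordering of the edges of `G` is a bijection from the
edges of `G` to initial segment positions. -/
abbrev EdgeOrdering (G : SimpleGraph V) : Type _ :=
  ↥G.edgeFinset ≃ Fin G.edgeFinset.card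

/-- Two edges (as unordered pairs) share a vertex. -/
def SharesVertex {V : Type*} (e f : Sym2 V) : Prop := ∃ v, v ∈ e ∧ v ∈ f

/-- The number of connected components of the spanning forest produced by the
forest building process run with the edge ordering `π`:  an edge starts a new
component iff it precedes every other edge sharing one of its vertices, and the
number of components (ignoring isolated vertices) is the number of such edges. -/
def numComponents (G : SimpleGraph V) (π : EdgeOrdering G) : ℕ :=
  (univ.filter fun e : ↥G.edgeFinset =>
    ∀ f : ↥G.edgeFinset, f ≠ e → SharesVertex (e : Sym2 V) (f : Sym2 V) → π e < π f).card

/-- `P G k` is the probability that the forest building process on `G`, run with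
a uniformly random edge ordering, produces a spanning forest with `k` components. -/
def P (G : SimpleGraph V) (k : ℕ) : ℚ :=
  ((univ.filter fun π : EdgeOrdering G => numComponents G π = k).card : ℚ) /
    (Fintype.card (EdgeOrdering G))

/-- The expected number of components of the forest building process on `G`. -/
def expComponents (G : SimpleGraph V) : ℚ :=
  (∑ π : EdgeOrdering G, (numComponents G π : ℚ)) / (Fintype.card (EdgeOrdering G))

/-- The component generating function `p_G(x) = ∑ₖ P(G,k) xᵏ`, evaluated at `x`.
Isolated vertices contribute nothing, matching the convention `p_{K₁}(x) = 1`. -/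
def pPoly (G : SimpleGraph V) (x : ℚ) : ℚ :=
  (∑ π : EdgeOrdering G, x ^ numComponents G π) / (Fintype.card (EdgeOrdering G))

/-- The sum of the degrees of the two endpoints of an edge. -/
def degSum (G : SimpleGraph V) (e : Sym2 V) : ℕ :=
  Sym2.lift ⟨fun u v => G.degree u + G.degree v, fun _ _ => Nat.add_comm _ _⟩ e

section FirstPosition

variable {α β : Type*}

theorem isMinOn_iff_forall_ne_lt [PartialOrder β] {f : α → β} (hf : f.Injective)
    {s : Set α} {a : α} : IsMinOn f s a ↔ ∀ x ∈ s, x ≠ a → f a < f x := by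
  refine ⟨fun h x hx hxa => (isMinOn_iff.1 h x hx).lt_of_ne fun hfx => hxa (hf hfx).symm,
    fun h => isMinOn_iff.2 fun x hx => ?_⟩
  rcases eq_or_ne x a with rfl | hxa
  · exact le_rfl
  · exact (h x hx hxa).le

theorem card_filter_isMinOn_eq_one [LinearOrder β] {f : α → β} (hf : f.Injective)
    {s : Finset α} (hs : s.Nonempty) : #{a ∈ s | IsMinOn f s a} = 1 := by
  obtain ⟨a, ha, hmin⟩ := s.exists_min_image f hs
  refine card_eq_one.2 ⟨a, ext fun b => ?_⟩
  simp only [mem_filter, mem_singleton]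
  constructor
  · rintro ⟨hb, hbmin⟩
    exact hf ((isMinOn_iff.1 hbmin a ha).antisymm (hmin b hb))
  · rintro rfl
    exact ⟨ha, isMinOn_iff.2 hmin⟩

variable [DecidableEq α]

theorem isMinOn_comp_swap [Preorder β] {f : α → β} {s : Set α} {a b : α} (ha : a ∈ s)
    (hb : b ∈ s) (h : IsMinOn f s a) : IsMinOn (f ∘ Equiv.swap a b) s b := by
  refine h.comp_mapsTo (fun x hx => ?_) (by simp)
  rcases eq_or_ne x a with rfl | hxa
  · simpa using hb
  rcases eq_or_ne x b with rfl | hxb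
  · simpa using ha
  · simpa [Equiv.swap_apply_of_ne_of_ne hxa hxb] using hx

variable [Fintype α] [Fintype β] [LinearOrder β]

theorem card_isMinOn_eq_of_mem {s : Finset α} {a b : α} (ha : a ∈ s) (hb : b ∈ s) :
    #{π : α ≃ β | IsMinOn π s a} = #{π : α ≃ β | IsMinOn π s b} := by
  refine card_nbij' (fun π => (Equiv.swap a b).trans π) (fun π => (Equiv.swap a b).trans π)
    (fun π hπ => ?_) (fun π hπ => ?_) (fun π _ => ?_) (fun π _ => ?_)
  · rw [mem_coe, mem_filter] at hπ ⊢
    exact ⟨mem_univ _, isMinOn_comp_swap ha hb hπ.2⟩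
  · rw [mem_coe, mem_filter] at hπ ⊢
    rw [Equiv.swap_comm]
    exact ⟨mem_univ _, isMinOn_comp_swap hb ha hπ.2⟩
  all_goals ext x; simp

theorem card_mul_card_isMinOn {s : Finset α} {a : α} (ha : a ∈ s) :
    #s * #{π : α ≃ β | IsMinOn π s a} = Fintype.card (α ≃ β) := calc
  #s * #{π : α ≃ β | IsMinOn π s a} = ∑ b ∈ s, #{π : α ≃ β | IsMinOn π s b} :=
    (sum_const_nat fun b hb => card_isMinOn_eq_of_mem hb ha).symm
  _ = ∑ π : α ≃ β, #{b ∈ s | IsMinOn π s b} :=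
    (sum_card_bipartiteAbove_eq_sum_card_bipartiteBelow _).symm
  _ = Fintype.card (α ≃ β) := by
    simp [card_filter_isMinOn_eq_one (Equiv.injective _) ⟨a, ha⟩]

theorem sum_card_isMinOn_div_card [Nonempty (α ≃ β)] (s : α → Finset α) (hs : ∀ a, a ∈ s a) :
    (∑ π : α ≃ β, (#{a | IsMinOn π (s a) a} : ℚ)) / Fintype.card (α ≃ β) =
      ∑ a, 1 / (#(s a) : ℚ) := by
  have hswap : ∑ π : α ≃ β, #{a | IsMinOn π (s a) a} =
      ∑ a, #{π : α ≃ β | IsMinOn π (s a) a} :=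
    sum_card_bipartiteAbove_eq_sum_card_bipartiteBelow _
  rw [← Nat.cast_sum, hswap, Nat.cast_sum, sum_div]
  refine sum_congr rfl fun a _ => ?_
  have hcard := card_mul_card_isMinOn (β := β) (hs a)
  have hpos : #{π : α ≃ β | IsMinOn π (s a) a} ≠ 0 := by
    rintro h0
    rw [h0, mul_zero] at hcard
    exact Fintype.card_ne_zero hcard.symm
  rw [← hcard, Nat.cast_mul, div_mul_cancel_right₀ (Nat.cast_ne_zero.2 hpos), one_div]

end FirstPosition

theorem sharesVertex_self {V : Type*} (e : Sym2 V) : SharesVertex e e :=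
  ⟨_, e.out_fst_mem, e.out_fst_mem⟩

theorem card_filter_sharesVertex_add_one (G : SimpleGraph V) {e : Sym2 V}
    (he : e ∈ G.edgeFinset) : #{f ∈ G.edgeFinset | SharesVertex e f} + 1 = degSum G e := by
  induction e using Sym2.ind with
  | h u v =>
    have huv : G.Adj u v := by simpa using he
    have hunion : {f ∈ G.edgeFinset | SharesVertex s(u, v) f} =
        G.incidenceFinset u ∪ G.incidenceFinset v := by
      ext f
      simp only [SharesVertex, Sym2.mem_iff, mem_filter, mem_union,
        SimpleGraph.incidenceFinset_eq_filter]
      grind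
    have hinter : G.incidenceFinset u ∩ G.incidenceFinset v = {s(u, v)} := by
      rw [← coe_inj]
      push_cast
      exact G.incidenceSet_inter_incidenceSet_of_adj huv
    rw [hunion, ← card_singleton s(u, v), ← hinter, card_union_add_card_inter,
      G.card_incidenceFinset_eq_degree, G.card_incidenceFinset_eq_degree]
    rfl

def incidentEdges (G : SimpleGraph V) (e : ↥G.edgeFinset) : Finset ↥G.edgeFinset :=
  {f | SharesVertex (e : Sym2 V) f}

theorem mem_incidentEdges_self (G : SimpleGraph V) (e : ↥G.edgeFinset) :
    e ∈ incidentEdges G e := by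
  simp [incidentEdges, sharesVertex_self]

theorem card_incidentEdges_add_one (G : SimpleGraph V) (e : ↥G.edgeFinset) :
    #(incidentEdges G e) + 1 = degSum G e := by
  rw [incidentEdges, univ_eq_attach, filter_attach (SharesVertex (e : Sym2 V)), card_map,
    card_attach, card_filter_sharesVertex_add_one G e.2]

theorem numComponents_eq_card_isMinOn (G : SimpleGraph V) (π : EdgeOrdering G) :
    numComponents G π = #{e | IsMinOn π (incidentEdges G e) e} := by
  refine congrArg card (filter_congr fun e _ => ?_)
  simp only [isMinOn_iff_forall_ne_lt π.injective, incidentEdges, coe_filter, mem_univ,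
    true_and, Set.mem_ofPred_eq]
  exact forall_congr' fun _ => imp.swap

theorem expected_components_general (G : SimpleGraph V) :
    expComponents G = ∑ e ∈ G.edgeFinset, 1 / ((degSum G e : ℚ) - 1) := by
  have : Nonempty (EdgeOrdering G) := ⟨G.edgeFinset.equivFin⟩
  simp only [expComponents, numComponents_eq_card_isMinOn]
  rw [sum_card_isMinOn_div_card _ (mem_incidentEdges_self G), ← sum_coe_sort G.edgeFinset]
  refine sum_congr rfl fun e _ => ?_
  rw [← card_incidentEdges_add_one G e]
  push_cast
  ring

/-- **Expected number of components** (Theorem 3 of the paper):  for a graph `G`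
without isolated vertices, the expected number of connected components produced
by the forest building process is `∑_{uv ∈ E(G)} 1/(d(u)+d(v)-1)`. -/
theorem expected_components (G : SimpleGraph V) (h : ∀ v : V, 0 < G.degree v) :
    expComponents G = ∑ e ∈ G.edgeFinset, 1 / ((degSum G e : ℚ) - 1) :=
  expected_components_general G

end ForestBuilding
end
end

section
/- For integers $N \geq t \geq 0$ and $0 \leq K \leq N$: $\sum_{d=0}^{t} \frac{1}{d+1}\cdot\frac{\binom{K}{d}\binom{N-K}{t-d}}{\binom{N}{t}} = \frac{N+1}{(t+1)(K+1)}\left(1 - \frac{\binom{N-K}{t+1}}{\binom{N+1}{t+1}}\right)$. -/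
/-!
The absorption identity `(K + 1) * C(K, d) = (d + 1) * C(K + 1, d + 1)` turns the weight
`1 / (d + 1)` into a shift of the upper binomial, after which Vandermonde's identity sums the
series; the same identity for `N` converts the normalisation `C(N, t)` into `C(N + 1, t + 1)`.
-/

open Finset

/-- Vandermonde's identity for `m + 1` and `n`, with the `d = 0` term of the convolution split off. -/
theorem Nat.sum_range_choose_succ_mul_choose_add (m n t : ℕ) :
    ∑ d ∈ range (t + 1), (m + 1).choose (d + 1) * n.choose (t - d) + n.choose (t + 1) =
      (m + 1 + n).choose (t + 1) := by
  rw [Nat.add_choose_eq, Nat.sum_antidiagonal_succ, Nat.sum_antidiagonal_eq_sum_range_succ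
    (fun i j => (m + 1).choose (i + 1) * n.choose j)]
  simp only [Nat.choose_zero_right, one_mul, add_comm]

theorem sum_range_inv_succ_mul_choose_mul_choose (m n t : ℕ) :
    ∑ d ∈ range (t + 1), 1 / ((d : ℚ) + 1) * ((m.choose d : ℚ) * (n.choose (t - d) : ℚ)) =
      (((m + 1 + n).choose (t + 1) : ℚ) - n.choose (t + 1)) / ((m : ℚ) + 1) := by
  have absorb : ∀ d : ℕ, 1 / ((d : ℚ) + 1) * (m.choose d : ℚ) =
      ((m + 1).choose (d + 1) : ℚ) / ((m : ℚ) + 1) := by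
    intro d
    have h : ((m : ℚ) + 1) * m.choose d = (m + 1).choose (d + 1) * ((d : ℚ) + 1) := by
      exact_mod_cast Nat.add_one_mul_choose_eq m d
    field_simp
    linear_combination h
  have vandermonde := congrArg (Nat.cast : ℕ → ℚ) (Nat.sum_range_choose_succ_mul_choose_add m n t)
  push_cast at vandermonde
  simp_rw [← mul_assoc, absorb, div_mul_eq_mul_div, ← sum_div, ← vandermonde, add_sub_cancel_right]

theorem hypergeometric_inverse_moment (N t K : ℕ) (ht : t ≤ N) (hK : K ≤ N) :
    ∑ d ∈ Finset.range (t + 1),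
      (1 / ((d : ℚ) + 1)) * ((K.choose d : ℚ) * ((N - K).choose (t - d) : ℚ)) /
        (N.choose t : ℚ) =
    (((N : ℚ) + 1) / (((t : ℚ) + 1) * ((K : ℚ) + 1))) *
      (1 - ((N - K).choose (t + 1) : ℚ) / ((N + 1).choose (t + 1) : ℚ)) := by
  have hN : K + 1 + (N - K) = N + 1 := by omega
  rw [← sum_div, sum_range_inv_succ_mul_choose_mul_choose, hN]
  have hNt : (N.choose t : ℚ) ≠ 0 := by exact_mod_cast (Nat.choose_pos ht).ne'
  have hNt' : ((N + 1).choose (t + 1) : ℚ) ≠ 0 := by exact_mod_cast (Nat.choose_pos (by omega)).ne'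
  have absorb : ((N : ℚ) + 1) * N.choose t = (N + 1).choose (t + 1) * ((t : ℚ) + 1) := by
    exact_mod_cast Nat.add_one_mul_choose_eq N t
  field_simp
  linear_combination (((N - K).choose (t + 1) : ℚ) - (N + 1).choose (t + 1)) * absorb
end

section
/- Let $G$ and $H$ be disjoint finite simple graphs without isolated vertices. In the forest building process on the disjoint union $G \mathbin{\dot\cup} H$, the generating polynomial of the number of components satisfies $p_{G \dot\cup H}(x) = p_G(x) \cdot p_H(x)$, equivalently $P(G \dot\cup H, k) = \sum_{\ell} P(G,\ell) P(H, k-\ell)$. -/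
open Finset

noncomputable section
open scoped Classical

namespace ForestBuilding

variable {V : Type*} [Fintype V]

/-!
Whether an edge is a leader (it precedes every other edge it meets) depends only on the relative
order of the edges around it. On `G ⊕g H` no edge of `G` meets an edge of `H`, so the number of
leaders of an ordering of `E(G) ⊔ E(H)` is the number of leaders of its restriction to `E(G)` plus
that of its restriction to `E(H)`. Precomposing a uniform ordering with independent uniform
permutations of `E(G)` and of `E(H)` keeps it uniform, and turns the relative orders on the two
parts into independent uniform orderings of `E(G)` and `E(H)`; so the component count of `G ⊕g H`
is distributed as the sum of independent copies of those of `G` and `H`.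
-/

open scoped BigOperators

section LeaderCount

variable {α β γ ι κ : Type*} [Fintype α] [Fintype β]

def leaderCount [LinearOrder ι] (R : α → α → Prop) (π : α → ι) : ℕ :=
  #{a | ∀ b, b ≠ a → R a b → π a < π b}

theorem numComponents_eq_leaderCount (G : SimpleGraph V) (π : EdgeOrdering G) :
    numComponents G π = leaderCount (fun e f : G.edgeFinset => SharesVertex e.1 f.1) π := by
  unfold numComponents leaderCount
  convert rfl

theorem leaderCount_congr [LinearOrder ι] [LinearOrder κ] (R : α → α → Prop) {π : α → ι}
    {π' : α → κ} (h : ∀ a b, π a < π b ↔ π' a < π' b) : leaderCount R π = leaderCount R π' := by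
  simp only [leaderCount, h]

theorem leaderCount_comp_equiv [LinearOrder ι] (e : α ≃ β) (R : β → β → Prop) (π : β → ι) :
    leaderCount R π = leaderCount (fun a a' => R (e a) (e a')) (π ∘ e) := by
  simp only [leaderCount, ← Fintype.card_subtype]
  refine Fintype.card_congr (e.subtypeEquiv fun a => ?_).symm
  simp [e.forall_congr_left, Equiv.eq_symm_apply, eq_comm]

theorem leaderCount_sum [LinearOrder ι] (R : α ⊕ β → α ⊕ β → Prop)
    (hl : ∀ a b, ¬ R (.inl a) (.inr b)) (hr : ∀ a b, ¬ R (.inr b) (.inl a)) (π : α ⊕ β → ι) :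
    leaderCount R π = leaderCount (fun a a' => R (.inl a) (.inl a')) (π ∘ .inl) +
      leaderCount (fun b b' => R (.inr b) (.inr b')) (π ∘ .inr) := by
  simp only [leaderCount, Finset.card_filter, Fintype.sum_sum_type]
  simp [Sum.forall, hl, hr]

theorem exists_equiv_fin_lt_iff [LinearOrder ι] {m : ℕ} {π : α → ι} (hπ : π.Injective)
    (hm : Fintype.card α = m) : ∃ σ : α ≃ Fin m, ∀ a b, σ a < σ b ↔ π a < π b := by
  let _ : LinearOrder α := LinearOrder.lift' π hπ
  exact ⟨(Fintype.orderIsoFinOfCardEq α hm).symm.toEquiv, fun a b =>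
    (Fintype.orderIsoFinOfCardEq α hm).symm.lt_iff_lt⟩

variable {M : Type*} [AddCommMonoid M] [Module ℚ≥0 M] [DecidableEq α] [DecidableEq β]

theorem expect_leaderCount_comp_perm [LinearOrder ι] (R : α → α → Prop) {m : ℕ} {π : α → ι}
    (hπ : π.Injective) (hm : Fintype.card α = m) (F : ℕ → M) :
    𝔼 g : Equiv.Perm α, F (leaderCount R (π ∘ g)) = 𝔼 σ : α ≃ Fin m, F (leaderCount R σ) := by
  obtain ⟨σ₀, hσ₀⟩ := exists_equiv_fin_lt_iff hπ hm
  refine Fintype.expect_equiv ((Equiv.refl α).equivCongr σ₀) _ _ fun g => ?_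
  exact congrArg F (leaderCount_congr R fun a b => (hσ₀ (g a) (g b)).symm)

theorem expect_comp_sumCongr [Fintype γ] [DecidableEq γ] (f : (α ⊕ β ≃ γ) → M) :
    𝔼 ρ, f ρ = 𝔼 ρ, 𝔼 g : Equiv.Perm α, 𝔼 h : Equiv.Perm β, f ((g.sumCongr h).trans ρ) := by
  calc 𝔼 ρ, f ρ = 𝔼 g : Equiv.Perm α, 𝔼 h : Equiv.Perm β, 𝔼 ρ, f ρ := by
        simp only [Fintype.expect_const]
    _ = 𝔼 g : Equiv.Perm α, 𝔼 h : Equiv.Perm β, 𝔼 ρ, f ((g.sumCongr h).trans ρ) := by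
        refine Finset.expect_congr rfl fun g _ => Finset.expect_congr rfl fun h _ => ?_
        exact Fintype.expect_equiv ((g.sumCongr h).equivCongr (Equiv.refl γ)) _ _
          fun ρ => congrArg f (by ext; simp)
    _ = _ := by
        simp_rw [Finset.expect_comm (t := (univ : Finset (α ⊕ β ≃ γ)))]

theorem expect_leaderCount_sum (R : α ⊕ β → α ⊕ β → Prop) (hl : ∀ a b, ¬ R (.inl a) (.inr b))
    (hr : ∀ a b, ¬ R (.inr b) (.inl a)) {m n : ℕ} (hα : Fintype.card α = m)
    (hβ : Fintype.card β = n) (F : ℕ → M) :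
    𝔼 ρ : α ⊕ β ≃ Fin (m + n), F (leaderCount R ρ) =
      𝔼 σ : α ≃ Fin m, 𝔼 τ : β ≃ Fin n,
        F (leaderCount (fun a a' => R (.inl a) (.inl a')) σ +
          leaderCount (fun b b' => R (.inr b) (.inr b')) τ) := by
  have : Nonempty (α ⊕ β ≃ Fin (m + n)) :=
    ⟨Fintype.equivFinOfCardEq (by rw [Fintype.card_sum, hα, hβ])⟩
  rw [expect_comp_sumCongr, ← Fintype.expect_const (ι := α ⊕ β ≃ Fin (m + n))
    (𝔼 σ : α ≃ Fin m, _)]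
  refine Finset.expect_congr rfl fun ρ _ => ?_
  have hl' := ρ.injective.comp Sum.inl_injective
  have hr' := ρ.injective.comp Sum.inr_injective
  simp only [leaderCount_sum R hl hr]
  calc _ = 𝔼 g : Equiv.Perm α, 𝔼 τ : β ≃ Fin n,
        F (leaderCount (fun a a' => R (.inl a) (.inl a')) (ρ ∘ .inl ∘ g) +
          leaderCount (fun b b' => R (.inr b) (.inr b')) τ) :=
        Finset.expect_congr rfl fun g _ => expect_leaderCount_comp_perm _ hr' hβ
          (fun k => F (leaderCount _ (ρ ∘ .inl ∘ g) + k))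
    _ = _ := expect_leaderCount_comp_perm _ hl' hα
          (fun k => 𝔼 τ : β ≃ Fin n, F (k + leaderCount _ τ))

end LeaderCount

theorem sharesVertex_map_iff {X Y : Type*} {f : X → Y} (hf : f.Injective) {e e' : Sym2 X} :
    SharesVertex (e.map f) (e'.map f) ↔ SharesVertex e e' := by
  simp [SharesVertex, Sym2.mem_map, hf.eq_iff]

theorem not_sharesVertex_map_inl_map_inr {X Y : Type*} (e : Sym2 X) (e' : Sym2 Y) :
    ¬ SharesVertex (e.map Sum.inl) (e'.map Sum.inr) := by
  simp [SharesVertex, Sym2.mem_map]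

theorem not_sharesVertex_map_inr_map_inl {X Y : Type*} (e : Sym2 X) (e' : Sym2 Y) :
    ¬ SharesVertex (e'.map Sum.inr) (e.map Sum.inl) := by
  simp [SharesVertex, Sym2.mem_map]

theorem eq_sum_of_adj {X Y : Type*} (G : SimpleGraph X) (H : SimpleGraph Y)
    {K : SimpleGraph (X ⊕ Y)} (hGK : ∀ a b : X, K.Adj (.inl a) (.inl b) ↔ G.Adj a b)
    (hHK : ∀ a b : Y, K.Adj (.inr a) (.inr b) ↔ H.Adj a b)
    (hcross : ∀ a b, ¬ K.Adj (.inl a) (.inr b)) : K = G ⊕g H := by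
  ext (a | a) (b | b)
  · simp [hGK]
  · simp [hcross]
  · simpa using fun h => hcross b a h.symm
  · simp [hHK]

section DisjointSum

variable {W : Type*} [Fintype W] (G : SimpleGraph V) (H : SimpleGraph W)

def edgeFinsetSumEquiv : G.edgeFinset ⊕ H.edgeFinset ≃ (G ⊕g H).edgeFinset :=
  ((Equiv.subtypeEquivRight fun _ => SimpleGraph.mem_edgeFinset).sumCongr
    (Equiv.subtypeEquivRight fun _ => SimpleGraph.mem_edgeFinset)).trans
    (SimpleGraph.edgeSetSumEquiv.symm.trans
      (Equiv.subtypeEquivRight fun _ => SimpleGraph.mem_edgeFinset.symm))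

theorem coe_edgeFinsetSumEquiv_inl (e : G.edgeFinset) :
    (edgeFinsetSumEquiv G H (.inl e) : Sym2 (V ⊕ W)) = e.1.map Sum.inl := by
  obtain ⟨e, he⟩ := e
  induction e using Sym2.ind
  rfl

theorem coe_edgeFinsetSumEquiv_inr (e : H.edgeFinset) :
    (edgeFinsetSumEquiv G H (.inr e) : Sym2 (V ⊕ W)) = e.1.map Sum.inr := by
  obtain ⟨e, he⟩ := e
  induction e using Sym2.ind
  rfl

theorem card_edgeFinset_sum : #(G ⊕g H).edgeFinset = #G.edgeFinset + #H.edgeFinset := by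
  have := Fintype.card_congr (edgeFinsetSumEquiv G H)
  rwa [Fintype.card_sum, Fintype.card_coe, Fintype.card_coe, Fintype.card_coe, eq_comm] at this

theorem expect_numComponents_sum {M : Type*} [AddCommMonoid M] [Module ℚ≥0 M]
    (F : ℕ → M) :
    𝔼 π : EdgeOrdering (G ⊕g H), F (numComponents _ π) =
      𝔼 σ : EdgeOrdering G, 𝔼 τ : EdgeOrdering H, F (numComponents G σ + numComponents H τ) := by
  set E := edgeFinsetSumEquiv G H
  let R (x y : G.edgeFinset ⊕ H.edgeFinset) : Prop := SharesVertex (E x).1 (E y).1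
  have hRl : (fun e e' => R (.inl e) (.inl e')) = fun e e' => SharesVertex e.1 e'.1 := by
    ext; simp [R, E, coe_edgeFinsetSumEquiv_inl, sharesVertex_map_iff Sum.inl_injective]
  have hRr : (fun e e' => R (.inr e) (.inr e')) = fun e e' => SharesVertex e.1 e'.1 := by
    ext; simp [R, E, coe_edgeFinsetSumEquiv_inr, sharesVertex_map_iff Sum.inr_injective]
  have hlr (e e') : ¬ R (.inl e) (.inr e') := by
    simpa [R, E, coe_edgeFinsetSumEquiv_inl, coe_edgeFinsetSumEquiv_inr] using
      not_sharesVertex_map_inl_map_inr e.1 e'.1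
  have hrl (e e') : ¬ R (.inr e') (.inl e) := by
    simpa [R, E, coe_edgeFinsetSumEquiv_inl, coe_edgeFinsetSumEquiv_inr] using
      not_sharesVertex_map_inr_map_inl e.1 e'.1
  have := expect_leaderCount_sum R hlr hrl (Fintype.card_coe _) (Fintype.card_coe _) F
  rw [hRl, hRr] at this
  simp only [numComponents_eq_leaderCount, ← this]
  refine Fintype.expect_equiv (M := M) (E.symm.equivCongr (finCongr (card_edgeFinset_sum G H))) _ _
    fun π => ?_
  rw [leaderCount_comp_equiv E]
  exact congrArg F (leaderCount_congr _ fun _ _ => Iff.rfl)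

end DisjointSum

-- Stated for any `Fintype` instance: the one inside `pPoly K` (generic vertex type) and the one
-- synthesised for `EdgeOrdering (G ⊕g H)` (via `DecidableEq (V ⊕ W)`) are not syntactically equal.
theorem pPoly_eq_expect (G : SimpleGraph V) [Fintype (EdgeOrdering G)] (x : ℚ) :
    pPoly G x = 𝔼 π : EdgeOrdering G, x ^ numComponents G π := by
  rw [Fintype.expect_eq_sum_div_card, pPoly]
  congr!

theorem P_eq_expect (G : SimpleGraph V) [Fintype (EdgeOrdering G)] (k : ℕ) :
    P G k = 𝔼 π : EdgeOrdering G, if numComponents G π = k then 1 else 0 := by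
  rw [Fintype.expect_eq_sum_div_card, Finset.sum_boole, P]
  congr!

theorem boole_add_eq_sum_range {R : Type*} [Semiring R] (a b k : ℕ) :
    (if a + b = k then 1 else 0 : R) =
      ∑ ℓ ∈ range (k + 1), (if a = ℓ then 1 else 0) * (if b = k - ℓ then 1 else 0) := by
  simp only [ite_zero_mul_ite_zero, mul_one, ite_and, Finset.sum_ite_eq, mem_range]
  rw [← ite_and]
  exact if_congr (by omega) rfl rfl

theorem pPoly_disjoint_union_general {W : Type*} [Fintype W]
    (G : SimpleGraph V) (H : SimpleGraph W) (K : SimpleGraph (V ⊕ W))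
    (hGK : ∀ a b : V, K.Adj (Sum.inl a) (Sum.inl b) ↔ G.Adj a b)
    (hHK : ∀ a b : W, K.Adj (Sum.inr a) (Sum.inr b) ↔ H.Adj a b)
    (hcross : ∀ (a : V) (b : W), ¬ K.Adj (Sum.inl a) (Sum.inr b)) :
    (∀ x : ℚ, pPoly K x = pPoly G x * pPoly H x) ∧
      (∀ k : ℕ, P K k = ∑ ℓ ∈ Finset.range (k + 1), P G ℓ * P H (k - ℓ)) := by
  obtain rfl := eq_sum_of_adj G H hGK hHK hcross
  refine ⟨fun x => ?_, fun k => ?_⟩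
  · simp only [pPoly_eq_expect, expect_numComponents_sum, Fintype.expect_mul_expect, pow_add]
  · rw [P_eq_expect, expect_numComponents_sum G H fun n => if n = k then 1 else 0]
    simp only [P_eq_expect, Fintype.expect_mul_expect, boole_add_eq_sum_range,
      Finset.expect_sum_comm]

/-- **Disjoint unions** (part of Theorem 5 of the paper):  if `K` is the
disjoint union of graphs `G` and `H` (each without isolated vertices), then the
component generating polynomial of `K` is the product of those of `G` and `H`;
equivalently `P(G ∪̇ H, k) = ∑ₗ P(G,ℓ) P(H, k-ℓ)`. -/
theorem pPoly_disjoint_union {W : Type*} [Fintype W]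
    (G : SimpleGraph V) (H : SimpleGraph W) (K : SimpleGraph (V ⊕ W))
    (hGK : ∀ a b : V, K.Adj (Sum.inl a) (Sum.inl b) ↔ G.Adj a b)
    (hHK : ∀ a b : W, K.Adj (Sum.inr a) (Sum.inr b) ↔ H.Adj a b)
    (hcross : ∀ (a : V) (b : W), ¬ K.Adj (Sum.inl a) (Sum.inr b))
    (hG : ∀ v : V, 0 < G.degree v) (hH : ∀ w : W, 0 < H.degree w) :
    (∀ x : ℚ, pPoly K x = pPoly G x * pPoly H x) ∧
      (∀ k : ℕ, P K k = ∑ ℓ ∈ Finset.range (k + 1), P G ℓ * P H (k - ℓ)) :=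
  pPoly_disjoint_union_general G H K hGK hHK hcross

end ForestBuilding
end
end

section
/- Let $G$ be a finite simple graph with $m \geq 1$ edges, no isolated vertices, and no isolated edges (no connected component equal to a single edge). Then $p_G(x) = \frac{1}{m} \sum_{e \in E(G)} p_{G-e}(x)$, where for graphs with isolated vertices the polynomial is computed on the graph with isolated vertices removed (isolated vertices contribute factor 1). -/
open Finset

noncomputable section
open scoped Classical

namespace ForestBuilding

variable {V : Type*} [Fintype V]

/-! Every edge shares a vertex with another edge, so the last edge of an ordering never starts a
component, and deleting it does not change which of the other edges do. Hence
`(e, σ) ↦ (σ followed by e)` is a bijection from pairs of an edge `e` and an ordering of `G - e`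
onto the orderings of `G` that preserves the number of components; dividing by
`m! = m · (m - 1)!` gives the recurrence. -/

-- `EdgeOrdering (G.deleteEdges s)` is built with the classical `DecidableRel` instance; without
-- this one, `(G.deleteEdges s).edgeFinset` written directly would use a different instance.
attribute [-instance] SimpleGraph.instDecidableRelAdjDeleteEdgesOfDecidablePredSym2MemSetOfDecidableEq

theorem card_edgeOrdering (G : SimpleGraph V) :
    Fintype.card (EdgeOrdering G) = G.edgeFinset.card.factorial := by
  rw [Fintype.card_equiv (Fintype.equivFinOfCardEq (Fintype.card_coe _)), Fintype.card_coe]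

theorem edgeFinset_deleteEdges_singleton (G : SimpleGraph V) (e : Sym2 V) :
    (G.deleteEdges {e}).edgeFinset = G.edgeFinset.erase e := by
  ext f
  simp only [SimpleGraph.mem_edgeFinset, SimpleGraph.edgeSet_deleteEdges, Set.mem_sdiff,
    Set.mem_singleton_iff, Finset.mem_erase]
  tauto

theorem card_edgeFinset_deleteEdges_add_one {G : SimpleGraph V} {e : Sym2 V}
    (he : e ∈ G.edgeFinset) :
    (G.deleteEdges {e}).edgeFinset.card + 1 = G.edgeFinset.card := by
  rw [edgeFinset_deleteEdges_singleton, Finset.card_erase_add_one he]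

theorem exists_sharesVertex_of_two_le_degree {G : SimpleGraph V} {u v : V}
    (hu : 2 ≤ G.degree u) : ∃ f ∈ G.edgeSet, f ≠ s(u, v) ∧ SharesVertex s(u, v) f := by
  obtain ⟨w, hw, hwv⟩ := Finset.exists_mem_ne
    (s := G.neighborFinset u) (by rwa [SimpleGraph.card_neighborFinset_eq_degree]) v
  exact ⟨s(u, w), (G.mem_neighborFinset u w).1 hw, fun h => hwv (Sym2.congr_right.1 h),
    u, Sym2.mem_mk_left _ _, Sym2.mem_mk_left _ _⟩

theorem exists_sharesVertex {G : SimpleGraph V}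
    (hedge : ∀ u v : V, G.Adj u v → 2 ≤ G.degree u ∨ 2 ≤ G.degree v) {e : Sym2 V}
    (he : e ∈ G.edgeSet) : ∃ f ∈ G.edgeSet, f ≠ e ∧ SharesVertex e f := by
  induction e using Sym2.ind with
  | _ u v =>
    rcases hedge u v he with hu | hv
    · exact exists_sharesVertex_of_two_le_degree hu
    · rw [Sym2.eq_swap]
      exact exists_sharesVertex_of_two_le_degree hv

def IsStarter (G : SimpleGraph V) (π : EdgeOrdering G) (e : ↥G.edgeFinset) : Prop :=
  ∀ f : ↥G.edgeFinset, f ≠ e → SharesVertex (e : Sym2 V) (f : Sym2 V) → π e < π f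

theorem numComponents_eq_card_isStarter (G : SimpleGraph V) (π : EdgeOrdering G) :
    numComponents G π = (univ.filter (IsStarter G π)).card := by
  unfold numComponents IsStarter
  congr

theorem not_isStarter_of_val_eq_card_sub_one {G : SimpleGraph V}
    (hedge : ∀ u v : V, G.Adj u v → 2 ≤ G.degree u ∨ 2 ≤ G.degree v) {π : EdgeOrdering G}
    {e : ↥G.edgeFinset} (he : (π e : ℕ) = G.edgeFinset.card - 1) : ¬ IsStarter G π e := by
  obtain ⟨f, hf, hfe, hshare⟩ := exists_sharesVertex hedge (SimpleGraph.mem_edgeFinset.1 e.2)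
  intro h
  have hlt := h ⟨f, SimpleGraph.mem_edgeFinset.2 hf⟩
    (fun h' => hfe (congrArg (fun g : ↥G.edgeFinset => (g : Sym2 V)) h')) hshare
  have := (π ⟨f, SimpleGraph.mem_edgeFinset.2 hf⟩).is_lt
  rw [Fin.lt_def, he] at hlt
  omega

section extendOrdering

variable {G : SimpleGraph V} (e : ↥G.edgeFinset)

def deleteEdgeEquiv :
    ↥(G.deleteEdges {(e : Sym2 V)}).edgeFinset ≃ {f : ↥G.edgeFinset // f ≠ e} where
  toFun f :=
    have hf : (f : Sym2 V) ≠ e ∧ (f : Sym2 V) ∈ G.edgeFinset := by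
      simpa only [edgeFinset_deleteEdges_singleton, Finset.mem_erase] using f.2
    ⟨⟨f, hf.2⟩, fun h => hf.1 (congrArg (fun g : ↥G.edgeFinset => (g : Sym2 V)) h)⟩
  invFun f := ⟨f.1, by
    rw [edgeFinset_deleteEdges_singleton, Finset.mem_erase]
    exact ⟨fun h => f.2 (Subtype.ext h), f.1.2⟩⟩
  left_inv _ := rfl
  right_inv _ := rfl

def extendOrdering (σ : EdgeOrdering (G.deleteEdges {(e : Sym2 V)})) : EdgeOrdering G :=
  (Equiv.optionSubtypeNe e).symm.trans <|
    (Equiv.optionCongr ((deleteEdgeEquiv e).symm.trans σ)).trans <|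
      finSuccEquivLast.symm.trans (finCongr (card_edgeFinset_deleteEdges_add_one e.2))

variable (σ : EdgeOrdering (G.deleteEdges {(e : Sym2 V)}))

theorem extendOrdering_apply_self :
    (extendOrdering e σ e : ℕ) = G.edgeFinset.card - 1 := by
  have := card_edgeFinset_deleteEdges_add_one e.2
  simp only [extendOrdering, Equiv.trans_apply, Equiv.optionSubtypeNe_symm_self,
    Equiv.optionCongr_apply, Option.map_none, finSuccEquivLast_symm_none, finCongr_apply,
    Fin.val_cast, Fin.val_last]
  omega

theorem extendOrdering_apply_deleteEdgeEquiv (f : ↥(G.deleteEdges {(e : Sym2 V)}).edgeFinset) :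
    (extendOrdering e σ (deleteEdgeEquiv e f) : ℕ) = σ f := by
  simp only [extendOrdering, Equiv.trans_apply,
    Equiv.optionSubtypeNe_symm_of_ne (deleteEdgeEquiv e f).2, Equiv.optionCongr_apply,
    Option.map_some, finSuccEquivLast_symm_some, finCongr_apply,
    Fin.val_cast, Fin.val_castSucc, Subtype.coe_eta, Equiv.symm_apply_apply]

theorem extendOrdering_injective : Function.Injective (extendOrdering e) := fun σ τ h =>
  Equiv.ext fun f => Fin.ext <| by
    simpa only [extendOrdering_apply_deleteEdgeEquiv] using
      congrArg (fun π : EdgeOrdering G => (π (deleteEdgeEquiv e f) : ℕ)) h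

theorem isStarter_extendOrdering_iff (f : ↥(G.deleteEdges {(e : Sym2 V)}).edgeFinset) :
    IsStarter G (extendOrdering e σ) (deleteEdgeEquiv e f) ↔
      IsStarter (G.deleteEdges {(e : Sym2 V)}) σ f := by
  constructor
  · intro h g hgf hshare
    have := h (deleteEdgeEquiv e g)
      (fun h' => hgf ((deleteEdgeEquiv e).injective (Subtype.ext h'))) hshare
    rwa [Fin.lt_def, extendOrdering_apply_deleteEdgeEquiv,
      extendOrdering_apply_deleteEdgeEquiv] at this
  · intro h g hgf hshare
    rw [Fin.lt_def, extendOrdering_apply_deleteEdgeEquiv]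
    rcases eq_or_ne g e with rfl | hge
    · have := card_edgeFinset_deleteEdges_add_one g.2
      have := (σ f).is_lt
      rw [extendOrdering_apply_self]
      omega
    · obtain ⟨g', rfl⟩ : ∃ g', (deleteEdgeEquiv e g' : ↥G.edgeFinset) = g :=
        ⟨(deleteEdgeEquiv e).symm ⟨g, hge⟩, by simp⟩
      rw [extendOrdering_apply_deleteEdgeEquiv, ← Fin.lt_def]
      exact h g' (fun h' => hgf (by rw [h'])) hshare

theorem numComponents_extendOrdering
    (hedge : ∀ u v : V, G.Adj u v → 2 ≤ G.degree u ∨ 2 ≤ G.degree v) :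
    numComponents G (extendOrdering e σ) = numComponents (G.deleteEdges {(e : Sym2 V)}) σ := by
  simp only [numComponents_eq_card_isStarter]
  symm
  refine Finset.card_nbij (fun f => deleteEdgeEquiv e f) ?_ ?_ ?_
  · intro f hf
    simpa only [Finset.mem_coe, Finset.mem_filter, Finset.mem_univ, true_and,
      isStarter_extendOrdering_iff] using hf
  · intro f _ g _ h
    exact (deleteEdgeEquiv e).injective (Subtype.ext h)
  · intro g hg
    have hge : g ≠ e := by
      rintro rfl
      exact not_isStarter_of_val_eq_card_sub_one hedge (extendOrdering_apply_self g σ)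
        (Finset.mem_filter.1 hg).2
    refine ⟨(deleteEdgeEquiv e).symm ⟨g, hge⟩, ?_, by simp⟩
    simpa only [Finset.mem_coe, Finset.mem_filter, Finset.mem_univ, true_and,
      ← isStarter_extendOrdering_iff e σ, Equiv.apply_symm_apply] using hg

end extendOrdering

theorem bijective_sigma_extendOrdering {G : SimpleGraph V} (hm : 1 ≤ G.edgeFinset.card) :
    Function.Bijective
      fun p : Σ e : ↥G.edgeFinset, EdgeOrdering (G.deleteEdges {(e : Sym2 V)}) =>
        extendOrdering p.1 p.2 := by
  rw [Fintype.bijective_iff_injective_and_card]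
  constructor
  · rintro ⟨e, σ⟩ ⟨e', σ'⟩ (h : extendOrdering e σ = extendOrdering e' σ')
    obtain rfl : e = e' := (extendOrdering e σ).injective <| Fin.ext <| by
      rw [extendOrdering_apply_self, h, extendOrdering_apply_self]
    rw [extendOrdering_injective e h]
  · have hcard (e : ↥G.edgeFinset) :
        (G.deleteEdges {(e : Sym2 V)}).edgeFinset.card = G.edgeFinset.card - 1 := by
      have := card_edgeFinset_deleteEdges_add_one e.2
      omega
    simp only [Fintype.card_sigma, card_edgeOrdering, hcard, Finset.sum_const, Finset.card_univ,
      Fintype.card_coe, smul_eq_mul]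
    exact Nat.mul_factorial_pred (by omega)

theorem sum_edgeOrdering_eq_sum_deleteEdges {M : Type*} [AddCommMonoid M] {G : SimpleGraph V}
    (hm : 1 ≤ G.edgeFinset.card)
    (hedge : ∀ u v : V, G.Adj u v → 2 ≤ G.degree u ∨ 2 ≤ G.degree v) (F : ℕ → M) :
    ∑ π : EdgeOrdering G, F (numComponents G π) =
      ∑ e : ↥G.edgeFinset, ∑ σ : EdgeOrdering (G.deleteEdges {(e : Sym2 V)}),
        F (numComponents _ σ) := by
  rw [← (bijective_sigma_extendOrdering hm).sum_comp, Fintype.sum_sigma]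
  simp only [numComponents_extendOrdering _ _ hedge]

theorem pPoly_recurrence_general (G : SimpleGraph V)
    (hm : 1 ≤ G.edgeFinset.card)
    (hedge : ∀ u v : V, G.Adj u v → 2 ≤ G.degree u ∨ 2 ≤ G.degree v) :
    ∀ x : ℚ, pPoly G x =
      (1 / (G.edgeFinset.card : ℚ)) * ∑ e ∈ G.edgeFinset, pPoly (G.deleteEdges {e}) x := by
  intro x
  have hcard (e : ↥G.edgeFinset) : Fintype.card (EdgeOrdering (G.deleteEdges {(e : Sym2 V)})) =
      (G.edgeFinset.card - 1).factorial := by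
    rw [card_edgeOrdering, ← card_edgeFinset_deleteEdges_add_one e.2, Nat.add_sub_cancel]
  rw [← Finset.sum_coe_sort, pPoly, sum_edgeOrdering_eq_sum_deleteEdges hm hedge,
    card_edgeOrdering, ← Nat.mul_factorial_pred (by omega)]
  simp only [pPoly, hcard, ← Finset.sum_div]
  push_cast
  field_simp

/-- **Recurrence** (Theorem 5 of the paper):  if `G` has `m ≥ 1` edges, no
isolated vertices and no isolated edges (no component consisting of a single
edge, i.e. every edge has an endpoint of degree at least two), then
`p_G(x) = (1/m) ∑_{e ∈ E(G)} p_{G-e}(x)`, where isolated vertices created by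
deleting an edge contribute a factor `1` (the convention `p_{K₁}(x) = 1`). -/
theorem pPoly_recurrence (G : SimpleGraph V)
    (hm : 1 ≤ G.edgeFinset.card)
    (hiso : ∀ v : V, 0 < G.degree v)
    (hedge : ∀ u v : V, G.Adj u v → 2 ≤ G.degree u ∨ 2 ≤ G.degree v) :
    ∀ x : ℚ, pPoly G x =
      (1 / (G.edgeFinset.card : ℚ)) * ∑ e ∈ G.edgeFinset, pPoly (G.deleteEdges {e}) x :=
  pPoly_recurrence_general G hm hedge

end ForestBuilding
end
end
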